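/- Let q = p^d be a prime power, let n be an odd prime with n ≠ p, and let f : ZMod n → F_q be a nontrivial multiplicative function, viewed as a vector in F_q^n. Let B be a circulant n×n matrix over F_q with associated polynomial B(y), and A = B·Δ. Then f is a most complicated point for A if and only if gcd(B(y), ∑_{i=0}^{n−1} y^i) ≠ 1 in F_q[y]. -/

import Mathlib

/-!
Identify `F^n` with `R = F[X]/(X^n - 1)` through `x ↦ ∑ x i X^i`. Circulant matrices become
multiplication operators, and `A` becomes multiplication by `a = B(X)(X⁻¹ - 1)`. As `n ≠ 0` in
`F`, `R` is a finite reduced ring, so `a^(t+1) = a` for some `t ≥ 1`: every orbit has preperiod at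
most 1, with preperiod 0 exactly at the multiples of `a`. The Gauss sum identity
`G(f) G(f⁻¹) = f(-1) n` shows that `f` and `X - 1` generate the same ideal, which contains `a`;
hence `f` has maximal period, and `f` is most complicated iff `a ∤ f`, i.e. iff
`B(X)(X - 1) ∤ X - 1` in `R`, i.e. iff `B` is not invertible modulo `1 + X + ⋯ + X^(n-1)`.
-/

open Function Polynomial Finset

/-- The preperiod of the orbit of `x` under `T`: the least `s ≥ 0` such that
`T^[s+t] x = T^[s] x` for some `t ≥ 1`. -/
noncomputable def orbitPreperiod {S : Type*} (T : S → S) (x : S) : ℕ :=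
  sInf {s | ∃ t, 1 ≤ t ∧ T^[s + t] x = T^[s] x}

/-- The (eventual) period of the orbit of `x` under `T`: the least `t ≥ 1` such that
`T^[s+t] x = T^[s] x` for some `s ≥ 0`. -/
noncomputable def orbitPeriod {S : Type*} (T : S → S) (x : S) : ℕ :=
  sInf {t | 1 ≤ t ∧ ∃ s, T^[s + t] x = T^[s] x}

/-- `x` is most complicated for `T` if both its period and its preperiod are maximal. -/
def MostComplicated {S : Type*} [Fintype S] (T : S → S) (x : S) : Prop :=
  orbitPeriod T x = Finset.univ.sup (fun y => orbitPeriod T y) ∧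
  orbitPreperiod T x = Finset.univ.sup (fun y => orbitPreperiod T y)

/-- `x` is almost most complicated for `T` if its period is maximal and its preperiod
equals the maximal preperiod minus one. -/
def AlmostMostComplicated {S : Type*} [Fintype S] (T : S → S) (x : S) : Prop :=
  orbitPeriod T x = Finset.univ.sup (fun y => orbitPeriod T y) ∧
  orbitPreperiod T x = Finset.univ.sup (fun y => orbitPreperiod T y) - 1

/-- The cyclic shift operator `δ` on `F^n`: `(δ x) i = x (i+1)`. -/
def shiftOp (F : Type*) [Field F] (n : ℕ) : (ZMod n → F) →ₗ[F] (ZMod n → F) where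
  toFun x := fun i => x (i + 1)
  map_add' _ _ := rfl
  map_smul' _ _ := rfl

/-- A multiplicative function `ZMod n → F`: vanishes at `0`, is not identically zero on
nonzero elements, and is multiplicative on nonzero elements. -/
def IsMultFun {n : ℕ} {F : Type*} [Field F] (f : ZMod n → F) : Prop :=
  f 0 = 0 ∧ (∃ a : ZMod n, a ≠ 0 ∧ f a ≠ 0) ∧
    ∀ a b : ZMod n, a ≠ 0 → b ≠ 0 → f (a * b) = f a * f b

open scoped Matrix

section Orbit

variable {S S' : Type*} {T : S → S} {T' : S' → S'}

theorem orbitPeriod_le {x : S} {s t : ℕ} (ht : 1 ≤ t) (h : T^[s + t] x = T^[s] x) :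
    orbitPeriod T x ≤ t :=
  Nat.sInf_le ⟨ht, s, h⟩

theorem orbitPreperiod_le {x : S} {s t : ℕ} (ht : 1 ≤ t) (h : T^[s + t] x = T^[s] x) :
    orbitPreperiod T x ≤ s :=
  Nat.sInf_le ⟨t, ht, h⟩

theorem orbitPeriod_spec {x : S} {s t : ℕ} (ht : 1 ≤ t)
    (h : T^[s + t] x = T^[s] x) :
    1 ≤ orbitPeriod T x ∧ ∃ s, T^[s + orbitPeriod T x] x = T^[s] x :=
  Nat.sInf_mem (s := {t | 1 ≤ t ∧ ∃ s, T^[s + t] x = T^[s] x}) ⟨t, ht, s, h⟩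

theorem orbitPreperiod_eq_zero_iff {x : S} {s t : ℕ} (ht : 1 ≤ t) (h : T^[s + t] x = T^[s] x) :
    orbitPreperiod T x = 0 ↔ ∃ t, 1 ≤ t ∧ T^[t] x = x := by
  rw [orbitPreperiod, Nat.sInf_eq_zero, Set.eq_empty_iff_forall_notMem]
  simp only [Set.mem_ofPred_eq, zero_add, iterate_zero, id_eq]
  exact or_iff_left fun hempty => hempty s ⟨t, ht, h⟩

theorem orbitPeriod_semiconj {φ : S → S'} (hφ : Injective φ) (h : Semiconj φ T T')
    (x : S) :
    orbitPeriod T' (φ x) = orbitPeriod T x := by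
  simp only [orbitPeriod, ← (h.iterate_right _).eq, hφ.eq_iff]

theorem orbitPreperiod_semiconj {φ : S → S'} (hφ : Injective φ) (h : Semiconj φ T T')
    (x : S) :
    orbitPreperiod T' (φ x) = orbitPreperiod T x := by
  simp only [orbitPreperiod, ← (h.iterate_right _).eq, hφ.eq_iff]

theorem mostComplicated_semiconj_iff [Fintype S] [Fintype S'] (e : S ≃ S')
    (h : Semiconj e T T') (x : S) :
    MostComplicated T' (e x) ↔ MostComplicated T x := by
  have hsup (g : S' → ℕ) : univ.sup (g ∘ e) = univ.sup g := by
    rw [← Finset.map_univ_equiv e, Finset.sup_map]; rfl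
  simp only [MostComplicated, ← hsup, comp_def, orbitPeriod_semiconj e.injective h,
    orbitPreperiod_semiconj e.injective h]

end Orbit

section MulLeft

variable {R : Type*} [CommRing R] [IsReduced R]

theorem pow_succ_eq_self_of_pow_add_eq {a : R} {N t : ℕ} (hN : 1 ≤ N)
    (h : a ^ (N + t) = a ^ N) : a ^ (t + 1) = a := by
  have hkill : a ^ N * (1 - a ^ t) = 0 := by rw [mul_sub, mul_one, ← pow_add, h, sub_self]
  have hnil : (a - a ^ (t + 1)) ^ N = 0 := by
    obtain ⟨M, rfl⟩ := Nat.exists_eq_add_of_le' hN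
    calc (a - a ^ (t + 1)) ^ (M + 1) = (a * (1 - a ^ t)) ^ (M + 1) := by ring
      _ = a ^ (M + 1) * (1 - a ^ t) * (1 - a ^ t) ^ M := by
        rw [mul_pow, pow_succ' (1 - a ^ t)]; ring
      _ = 0 := by rw [hkill, zero_mul]
  exact (sub_eq_zero.mp (IsReduced.eq_zero _ ⟨N, hnil⟩)).symm

variable [Finite R]

theorem exists_pow_succ_eq_self (a : R) : ∃ t, 1 ≤ t ∧ a ^ (t + 1) = a := by
  obtain ⟨i, j, hij, h⟩ := Finite.exists_ne_map_eq_of_infinite (fun k : ℕ => a ^ (k + 1))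
  rcases hij.lt_or_gt with hlt | hlt
  · refine ⟨j - i, by omega, pow_succ_eq_self_of_pow_add_eq (N := i + 1) (by omega) ?_⟩
    rw [h, show i + 1 + (j - i) = j + 1 by omega]
  · refine ⟨i - j, by omega, pow_succ_eq_self_of_pow_add_eq (N := j + 1) (by omega) ?_⟩
    rw [← h, show j + 1 + (i - j) = i + 1 by omega]

theorem dvd_iff_exists_pow_mul_eq (a y : R) : a ∣ y ↔ ∃ t, 1 ≤ t ∧ a ^ t * y = y := by
  constructor
  · rintro ⟨c, rfl⟩
    obtain ⟨t, ht, hat⟩ := exists_pow_succ_eq_self a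
    exact ⟨t, ht, by rw [← mul_assoc, ← pow_succ, hat]⟩
  · rintro ⟨t, ht, h⟩
    exact ⟨a ^ (t - 1) * y, by rw [← mul_assoc, ← pow_succ', Nat.sub_add_cancel ht, h]⟩

theorem exists_iterate_mul_left_one_add (a z : R) :
    ∃ t, 1 ≤ t ∧ (a * ·)^[1 + t] z = (a * ·)^[1] z := by
  obtain ⟨t, ht, hat⟩ := exists_pow_succ_eq_self a
  exact ⟨t, ht, by simp only [mul_left_iterate, add_comm 1, hat, pow_one]⟩

theorem orbitPreperiod_mul_left_le_one (a z : R) : orbitPreperiod (a * ·) z ≤ 1 :=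
  let ⟨_, ht, h⟩ := exists_iterate_mul_left_one_add a z
  orbitPreperiod_le ht h

theorem orbitPreperiod_mul_left_eq_zero_iff (a z : R) :
    orbitPreperiod (a * ·) z = 0 ↔ a ∣ z := by
  obtain ⟨t, ht, h⟩ := exists_iterate_mul_left_one_add a z
  simpa only [mul_left_iterate, ← dvd_iff_exists_pow_mul_eq] using orbitPreperiod_eq_zero_iff ht h

theorem orbitPeriod_mul_left_le {a z : R} (hz : z ∣ a) (x : R) :
    orbitPeriod (a * ·) x ≤ orbitPeriod (a * ·) z := by
  obtain ⟨t, ht, h⟩ := exists_iterate_mul_left_one_add a z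
  obtain ⟨hP, s, hs⟩ := orbitPeriod_spec ht h
  obtain ⟨c, hc⟩ := hz
  obtain ⟨d, hd⟩ : z ∣ a * x := ⟨c * x, by rw [hc, mul_assoc]⟩
  refine orbitPeriod_le (s := s + 1) hP ?_
  simp only [mul_left_iterate] at hs ⊢
  rw [add_right_comm, pow_succ, pow_succ, mul_assoc, mul_assoc, hd, ← mul_assoc, ← mul_assoc,
    hs]

omit [Finite R] in
theorem mostComplicated_mul_left_iff [Fintype R] {a z : R} (ha : ¬IsUnit a) (hz : z ∣ a) :
    MostComplicated (a * ·) z ↔ ¬a ∣ z := by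
  have hperiod : orbitPeriod (a * ·) z = univ.sup (orbitPeriod (a * ·)) :=
    le_antisymm (le_sup (mem_univ z)) (Finset.sup_le fun x _ => orbitPeriod_mul_left_le hz x)
  have hpreperiod : univ.sup (orbitPreperiod (a * ·)) = 1 := by
    refine le_antisymm (Finset.sup_le fun x _ => orbitPreperiod_mul_left_le_one a x) ?_
    have hone : orbitPreperiod (a * ·) 1 ≠ 0 :=
      mt (orbitPreperiod_mul_left_eq_zero_iff a 1).mp (mt isUnit_iff_dvd_one.mpr ha)
    exact (Nat.one_le_iff_ne_zero.mpr hone).trans (le_sup (mem_univ 1))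
  rw [MostComplicated, hpreperiod, ← orbitPreperiod_mul_left_eq_zero_iff]
  have := orbitPreperiod_mul_left_le_one a z
  simp only [hperiod, true_and]
  omega

end MulLeft

theorem sum_apply_mul_inv_sub_one {n : ℕ} [Fact n.Prime] {F : Type*} [Field F]
    {f : ZMod n → F} (hsum : ∑ i, f i = 0) (k : ZMod n) :
    ∑ j, f (k * j⁻¹ - 1) = if k = 0 then (n : F) * f (-1) else 0 := by
  split_ifs with hk
  · simp [hk]
  · rw [← hsum]
    exact Equiv.sum_comp ((Equiv.inv _).trans ((Equiv.mulLeft₀ k hk).trans (Equiv.subRight 1))) f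

namespace IsMultFun

variable {n : ℕ} {F : Type*} [Field F] {f : ZMod n → F}

theorem apply_mul (hf : IsMultFun f) (a b : ZMod n) : f (a * b) = f a * f b := by
  obtain ⟨h0, -, hmul⟩ := hf
  by_cases ha : a = 0
  · simp [ha, h0]
  by_cases hb : b = 0
  · simp [hb, h0]
  exact hmul a b ha hb

theorem apply_one (hf : IsMultFun f) : f 1 = 1 := by
  obtain ⟨a, -, ha⟩ := hf.2.1
  have h := hf.apply_mul a 1
  rw [mul_one] at h
  exact (mul_eq_left₀ ha).mp h.symm

theorem apply_neg_one_mul_self (hf : IsMultFun f) : f (-1) * f (-1) = 1 := by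
  rw [← hf.apply_mul, neg_one_mul, neg_neg, hf.apply_one]

variable [Fact n.Prime]

theorem sum_eq_zero (hf : IsMultFun f) (hnt : ∃ a : ZMod n, a ≠ 0 ∧ f a ≠ 1) :
    ∑ i, f i = 0 := by
  obtain ⟨c, hc, hfc⟩ := hnt
  have hshift : f c * ∑ i, f i = ∑ i, f i := by
    rw [mul_sum]
    simp_rw [← hf.apply_mul]
    exact Equiv.sum_comp (Equiv.mulLeft₀ c hc) f
  have : (f c - 1) * ∑ i, f i = 0 := by rw [sub_one_mul, hshift, sub_self]
  exact (mul_eq_zero.mp this).resolve_left (sub_ne_zero.mpr hfc)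

/-- The Gauss-sum identity `G(f) G(f⁻¹) = f(-1) n`, written as a convolution of coefficient
vectors. -/
theorem circulant_mulVec_comp_inv (hf : IsMultFun f) (hsum : ∑ i, f i = 0) :
    Matrix.circulant f *ᵥ (fun j => f j⁻¹) =
      fun k => f (-1) * ((if k = 0 then (n : F) else 0) - 1) := by
  funext k
  have hterm (j : ZMod n) :
      f (k - j) * f j⁻¹ = f (k * j⁻¹ - 1) - if j = 0 then f (-1) else 0 := by
    rw [← hf.apply_mul]
    split_ifs with hj
    · simp [hj, hf.1]
    · rw [sub_mul, mul_inv_cancel₀ hj, sub_zero]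
  simp only [Matrix.mulVec, dotProduct, Matrix.circulant_apply, hterm, sum_sub_distrib,
    sum_ite_eq', mem_univ, if_true, sum_apply_mul_inv_sub_one hsum]
  split_ifs <;> ring

end IsMultFun

theorem AdjoinRoot.mk_mul_dvd_mk_iff_isCoprime {R : Type*} [CommRing R] [IsDomain R]
    {P g h : R[X]} (hP : g * h = P) (hh : h ≠ 0) (B : R[X]) :
    AdjoinRoot.mk P (B * h) ∣ AdjoinRoot.mk P h ↔ IsCoprime B g := by
  constructor
  · rintro ⟨c, hc⟩
    obtain ⟨c, rfl⟩ := AdjoinRoot.mk_surjective c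
    rw [← map_mul, eq_comm, AdjoinRoot.mk_eq_mk, ← hP] at hc
    obtain ⟨d, hd⟩ := (mul_dvd_mul_iff_right hh (a := g) (b := B * c - 1)).mp
      (by convert hc using 1; ring)
    exact ⟨c, -d, by linear_combination hd⟩
  · rintro ⟨u, v, huv⟩
    refine ⟨AdjoinRoot.mk P u, ?_⟩
    rw [← map_mul, eq_comm, AdjoinRoot.mk_eq_mk, ← hP]
    exact ⟨-v, by linear_combination h * huv⟩

/-- The group algebra `F[ZMod n]`: under `ofFun`, `Matrix.circulant v` acts as multiplication by
`ofFun v`. -/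
abbrev CirculantAlgebra (F : Type*) [Field F] (n : ℕ) := AdjoinRoot (X ^ n - 1 : F[X])

namespace CirculantAlgebra

variable {F : Type*} [Field F] {n : ℕ} [NeZero n]

local notation "r" => AdjoinRoot.root (X ^ n - 1 : F[X])

omit [NeZero n] in
theorem root_pow_eq_one : r ^ n = 1 := by
  have h := AdjoinRoot.eval₂_root (X ^ n - 1 : F[X])
  rwa [eval₂_sub, eval₂_X_pow, eval₂_one, sub_eq_zero] at h

theorem root_pow_val_add (i j : ZMod n) :
    r ^ (i + j).val = r ^ i.val * r ^ j.val := by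
  simpa only [AddChar.zmodChar_apply] using
    (AddChar.zmodChar n (root_pow_eq_one (F := F))).map_add_eq_mul i j

noncomputable def ofFun : (ZMod n → F) →ₗ[F] CirculantAlgebra F n :=
  Fintype.linearCombination F fun i => r ^ i.val

theorem ofFun_apply (x : ZMod n → F) : ofFun x = ∑ i, x i • r ^ i.val :=
  Fintype.linearCombination_apply F _ x

theorem mk_sum_C_mul_X_pow (x : ZMod n → F) :
    AdjoinRoot.mk _ (∑ i, C (x i) * X ^ i.val) = ofFun x := by
  simp [ofFun_apply, Algebra.smul_def]

theorem ofFun_indicator (i : ZMod n) : ofFun (fun j => if j = i then 1 else 0) = r ^ i.val := by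
  simp [ofFun_apply]

theorem ofFun_circulant_mulVec (v x : ZMod n → F) :
    ofFun (Matrix.circulant v *ᵥ x) = ofFun v * ofFun x := by
  simp only [ofFun_apply, Matrix.mulVec, dotProduct, Matrix.circulant_apply, sum_smul, sum_mul,
    mul_sum, smul_mul_smul_comm, ← root_pow_val_add]
  conv_lhs => rw [sum_comm]
  refine sum_congr rfl fun j _ => ?_
  rw [← Equiv.sum_comp (Equiv.addRight j)]
  simp

theorem coeff_sum_C_mul_X_pow (x : ZMod n → F) (m : ℕ) :
    (∑ i : ZMod n, C (x i) * X ^ i.val).coeff m =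
      ∑ i : ZMod n, if m = i.val then x i else 0 := by
  simp only [finsetSum_coeff, coeff_C_mul_X_pow]

theorem ofFun_injective : Function.Injective (ofFun : (ZMod n → F) →ₗ[F] _) := by
  refine (injective_iff_map_eq_zero _).mpr fun x hx => ?_
  rw [← mk_sum_C_mul_X_pow, AdjoinRoot.mk_eq_zero] at hx
  have hdeg : (∑ i : ZMod n, C (x i) * X ^ i.val).degree < (X ^ n - 1 : F[X]).degree := by
    rw [← C_1, degree_X_pow_sub_C (Nat.pos_of_neZero n), degree_lt_iff_coeff_zero]
    intro m hm
    rw [coeff_sum_C_mul_X_pow]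
    exact sum_eq_zero fun i _ => if_neg (by have := i.val_lt; omega)
  have hzero := eq_zero_of_dvd_of_degree_lt hx hdeg
  funext i
  have := congrArg (coeff · i.val) hzero
  simpa [coeff_sum_C_mul_X_pow, ZMod.val_injective n |>.eq_iff] using this

theorem ofFun_bijective : Function.Bijective (ofFun : (ZMod n → F) →ₗ[F] _) := by
  have hmonic : (X ^ n - 1 : F[X]).Monic := by
    simpa using monic_X_pow_sub_C (1 : F) (NeZero.ne n)
  let pb := AdjoinRoot.powerBasis' hmonic
  have := pb.finite
  have hrank : Module.finrank F (ZMod n → F) = Module.finrank F (CirculantAlgebra F n) := by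
    rw [Module.finrank_fintype_fun_eq_card, ZMod.card, pb.finrank, AdjoinRoot.powerBasis'_dim,
      ← C_1, natDegree_X_pow_sub_C]
  exact ⟨ofFun_injective, (LinearMap.injective_iff_surjective_of_finrank_eq_finrank hrank).mp
    ofFun_injective⟩

noncomputable def ofFunEquiv : (ZMod n → F) ≃ₗ[F] CirculantAlgebra F n :=
  LinearEquiv.ofBijective ofFun ofFun_bijective

@[simp]
theorem ofFunEquiv_apply (x : ZMod n → F) : ofFunEquiv x = ofFun x :=
  rfl

omit [NeZero n] in
theorem isReduced (hn : (n : F) ≠ 0) : IsReduced (CirculantAlgebra F n) := by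
  have hsep : (X ^ n - 1 : F[X]).Separable := by
    simpa using separable_X_pow_sub_C (1 : F) hn one_ne_zero
  exact (Ideal.isRadical_iff_quotient_reduced _).mp
    (isRadical_iff_span_singleton.mp hsep.squarefree.isRadical)

omit [NeZero n] in
theorem not_isUnit_root_sub_one : ¬IsUnit (r - 1) := by
  let ev : CirculantAlgebra F n →+* F := AdjoinRoot.lift (RingHom.id F) 1 (by simp)
  intro h
  simpa [ev] using h.map ev

theorem root_sub_one_dvd_ofFun {x : ZMod n → F} (hx : ∑ i, x i = 0) : r - 1 ∣ ofFun x := by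
  have hr : r - 1 = AdjoinRoot.mk _ (X - C 1) := by simp
  rw [← mk_sum_C_mul_X_pow, hr]
  refine map_dvd _ (dvd_iff_isRoot.mpr ?_)
  simp [IsRoot, eval_finsetSum, hx]

omit [NeZero n] in
theorem root_eq_pow_val_one : r = r ^ (1 : ZMod n).val := by
  rw [ZMod.val_one_eq_one_mod, ← pow_eq_pow_mod 1 root_pow_eq_one, pow_one]

theorem root_pow_val_neg_one_mul_root : r ^ (-1 : ZMod n).val * r = 1 :=
  calc r ^ (-1 : ZMod n).val * r = r ^ (-1 + 1 : ZMod n).val := by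
        rw [root_pow_val_add, ← root_eq_pow_val_one]
    _ = 1 := by rw [neg_add_cancel, ZMod.val_zero, pow_zero]

theorem root_sub_one_mul_ofFun_one : (r - 1) * ofFun (fun _ => 1) = 0 := by
  have hshift : r * ofFun (fun _ => 1) = ofFun (fun _ => 1) := by
    simp only [ofFun_apply, one_smul, mul_sum]
    calc ∑ i : ZMod n, r * r ^ i.val = ∑ i : ZMod n, r ^ (1 + i).val := by
          simp only [root_pow_val_add, ← root_eq_pow_val_one]
      _ = ∑ i : ZMod n, r ^ i.val := Equiv.sum_comp (Equiv.addLeft 1) fun i : ZMod n => r ^ i.val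
  rw [sub_one_mul, hshift, sub_self]

theorem ofFun_circulant_mul_sub_one_mulVec (b v x : ZMod n → F) :
    ofFun ((Matrix.circulant b * (Matrix.circulant v - 1)) *ᵥ x) =
      ofFun b * (ofFun v - 1) * ofFun x := by
  rw [← Matrix.mulVec_mulVec, Matrix.sub_mulVec, Matrix.one_mulVec, ofFun_circulant_mulVec,
    map_sub, ofFun_circulant_mulVec]
  ring

theorem ofFun_indicator_neg_one_sub_one :
    ofFun (fun j => if j = -1 then (1 : F) else 0) - 1 = -r ^ (-1 : ZMod n).val * (r - 1) := by
  rw [ofFun_indicator]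
  linear_combination (root_pow_val_neg_one_mul_root (F := F) (n := n))

theorem ofFun_dvd_root_sub_one [Fact n.Prime] {f : ZMod n → F} (hf : IsMultFun f)
    (hsum : ∑ i, f i = 0) (hn : (n : F) ≠ 0) : ofFun f ∣ r - 1 := by
  set c := f (-1) * n
  have hc : c ≠ 0 := mul_ne_zero (left_ne_zero_of_mul_eq_one hf.apply_neg_one_mul_self) hn
  have hvec : (fun k : ZMod n => f (-1) * ((if k = 0 then (n : F) else 0) - 1)) =
      c • (fun k => if k = 0 then (1 : F) else 0) - f (-1) • fun _ => 1 := by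
    funext k
    simp only [Pi.sub_apply, Pi.smul_apply, smul_eq_mul, c]
    split_ifs <;> ring
  have hconv : ofFun f * ofFun (fun j => f j⁻¹) * (r - 1) = c • (r - 1) := by
    rw [← ofFun_circulant_mulVec, hf.circulant_mulVec_comp_inv hsum, hvec, map_sub, map_smul,
      map_smul, ofFun_indicator, ZMod.val_zero, pow_zero, sub_mul, smul_mul_assoc,
      smul_mul_assoc, mul_comm (ofFun _), root_sub_one_mul_ofFun_one, smul_zero, sub_zero, one_mul]
  refine ⟨c⁻¹ • (ofFun (fun j => f j⁻¹) * (r - 1)), ?_⟩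
  rw [mul_smul_comm, ← mul_assoc, hconv, smul_smul, inv_mul_cancel₀ hc, one_smul]

end CirculantAlgebra

open CirculantAlgebra in
theorem stmt11_general (p n : ℕ) (hp : p.Prime)
    [Fact n.Prime] (hnp : n ≠ p)
    (F : Type) [Field F] [Fintype F] [CharP F p]
    (f : ZMod n → F) (hf : IsMultFun f)
    (hnt : ∃ a : ZMod n, a ≠ 0 ∧ f a ≠ 1)
    (b : ZMod n → F)
    (A : Matrix (ZMod n) (ZMod n) F)
    (hA : A = Matrix.circulant b *
        (Matrix.circulant (fun i : ZMod n => if i = -1 then (1 : F) else 0) - 1)) :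
    MostComplicated (fun y : ZMod n → F => A.mulVec y) f ↔
      ¬ IsCoprime (∑ i : ZMod n, C (b i) * X ^ i.val)
          (∑ i ∈ Finset.range n, (X : Polynomial F) ^ i) := by
  have hn : (n : F) ≠ 0 := by
    rw [Ne, CharP.cast_eq_zero_iff F p, Nat.prime_dvd_prime_iff_eq hp Fact.out]
    exact hnp.symm
  have hsum := hf.sum_eq_zero hnt
  set r := AdjoinRoot.root (X ^ n - 1 : F[X])
  set a := -r ^ (-1 : ZMod n).val * (ofFun b * (r - 1))
  have hunit : IsUnit (-r ^ (-1 : ZMod n).val) :=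
    (IsUnit.of_mul_eq_one _ root_pow_val_neg_one_mul_root).neg
  have hconj : Semiconj ofFunEquiv (A *ᵥ ·) (a * ·) := fun x => by
    simp only [ofFunEquiv_apply, hA,
      ofFun_circulant_mul_sub_one_mulVec, ofFun_indicator_neg_one_sub_one, a]
    ring
  have hfr : ofFun f ∣ r - 1 := ofFun_dvd_root_sub_one hf hsum hn
  have hrf : r - 1 ∣ ofFun f := root_sub_one_dvd_ofFun hsum
  have hra : r - 1 ∣ a := (Dvd.intro_left _ rfl).mul_left _
  have hdvd : a ∣ ofFun f ↔ IsCoprime (∑ i : ZMod n, C (b i) * X ^ i.val)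
      (∑ i ∈ Finset.range n, (X : Polynomial F) ^ i) := by
    have hX : AdjoinRoot.mk _ (X - 1) = r - 1 := by simp [r]
    rw [hunit.mul_left_dvd, ← AdjoinRoot.mk_mul_dvd_mk_iff_isCoprime (geom_sum_mul X n)
      (by simpa using X_sub_C_ne_zero (1 : F)), map_mul, mk_sum_C_mul_X_pow, hX]
    exact ⟨fun h => h.trans hfr, fun h => h.trans hrf⟩
  let _ : Fintype (CirculantAlgebra F n) := Fintype.ofEquiv _ ofFunEquiv.toEquiv
  have := isReduced hn
  rw [← mostComplicated_semiconj_iff ofFunEquiv.toEquiv hconj, LinearEquiv.coe_toEquiv,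
    ofFunEquiv_apply, mostComplicated_mul_left_iff
    (fun h => not_isUnit_root_sub_one (isUnit_of_dvd_unit hra h))
    (hfr.trans hra), hdvd]

/-- Theorem 2': a nontrivial multiplicative function `f : ZMod n → F_q`
(`n` an odd prime, `n ≠ p = char F_q`) is a most complicated point for `A = B·Δ`
(with `B` the circulant of `b`) iff `gcd(B(y), 1+y+⋯+y^{n-1}) ≠ 1` in `F_q[y]`. -/
theorem stmt11 (p d q n : ℕ) (hp : p.Prime) (hq : q = p ^ d)
    [Fact n.Prime] (hodd : Odd n) (hnp : n ≠ p)
    (F : Type) [Field F] [Fintype F] [CharP F p] (hF : Fintype.card F = q)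
    (f : ZMod n → F) (hf : IsMultFun f)
    (hnt : ∃ a : ZMod n, a ≠ 0 ∧ f a ≠ 1)
    (b : ZMod n → F)
    (A : Matrix (ZMod n) (ZMod n) F)
    (hA : A = Matrix.circulant b *
        (Matrix.circulant (fun i : ZMod n => if i = -1 then (1 : F) else 0) - 1)) :
    MostComplicated (fun y : ZMod n → F => A.mulVec y) f ↔
      ¬ IsCoprime (∑ i : ZMod n, C (b i) * X ^ i.val)
          (∑ i ∈ Finset.range n, (X : Polynomial F) ^ i) :=
  stmt11_general p n hp hnp F f hf hnt b A hA
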